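/- arXiv:1811.09770 — 2 statements merged into one kernel-verified Lean document; each statement's English description precedes it below -/
import Mathlib

section
/- There exists β₀ > 0 such that the following holds whenever β ≥ β₀. Let μ_β be any subsequential weak limit of the finite-volume Ising lattice gauge measures. Then for any plaquette p of ℤ⁴ and any m ≥ 1, the μ_β-probability that p is contained in a vortex of size at least m is at most C_m·e^{−2β·m}, where C_m is a constant depending only on m. -/
/-! Core definitions for Ising lattice gauge theory on ℤ⁴. -/

/-- A vertex of the lattice `ℤ⁴`. -/
abbrev V4 := Fin 4 → ℤ

/-- The unit vector in direction `i`. -/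
def unitVec (i : Fin 4) : V4 := fun m => if m = i then 1 else 0

/-- An (undirected, positively presented) nearest-neighbor edge of `ℤ⁴`:
the pair `(x, i)` stands for the edge from `x` to `x + eᵢ`. -/
abbrev Edge := V4 × Fin 4

/-- A plaquette `(x, i, j)`: the unit square with corner `x` spanned by directions `i, j`.
It is a genuine (positively oriented) plaquette when `i < j`. -/
abbrev Plaq := V4 × Fin 4 × Fin 4

/-- The two vertices of an edge. -/
def edgeVerts (e : Edge) : Finset V4 := {e.1, e.1 + unitVec e.2}

/-- The four edges of a plaquette. -/
def plaqEdges (p : Plaq) : Finset Edge :=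
  {(p.1, p.2.1), (p.1, p.2.2), (p.1 + unitVec p.2.1, p.2.2), (p.1 + unitVec p.2.2, p.2.1)}

/-- The four vertices of a plaquette. -/
def plaqVerts (p : Plaq) : Finset V4 :=
  {p.1, p.1 + unitVec p.2.1, p.1 + unitVec p.2.2, p.1 + unitVec p.2.1 + unitVec p.2.2}

/-- The plaquette variable `σ_p = σ_{e₁}σ_{e₂}σ_{e₃}σ_{e₄}` of a (±1-valued) spin
configuration `σ` on the edges of `ℤ⁴`. -/
def plaqSpin (σ : Edge → ℝ) (p : Plaq) : ℝ :=
  σ (p.1, p.2.1) * σ (p.1, p.2.2) * σ (p.1 + unitVec p.2.1, p.2.2) * σ (p.1 + unitVec p.2.2, p.2.1)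

/-- The vertex set of the cube `[a₁, a₁+w] × ⋯ × [a₄, a₄+w] ∩ ℤ⁴`. -/
noncomputable def cubeV (a : V4) (w : ℕ) : Finset V4 :=
  Fintype.piFinset fun m => Finset.Icc (a m) (a m + w)

/-- The set of nearest-neighbor edges of the cube with corner `a` and width `w`
(both endpoints in the cube). -/
noncomputable def cubeEdges (a : V4) (w : ℕ) : Finset Edge :=
  (cubeV a w ×ˢ (Finset.univ : Finset (Fin 4))).filter fun e => e.1 + unitVec e.2 ∈ cubeV a w

/-- The set of plaquettes of the cube with corner `a` and width `w`
(those with `i < j` all four of whose edges/vertices lie in the cube). -/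
noncomputable def cubePlaqs (a : V4) (w : ℕ) : Finset Plaq :=
  ((cubeV a w) ×ˢ ((Finset.univ : Finset (Fin 4)) ×ˢ (Finset.univ : Finset (Fin 4)))).filter
    fun p => p.2.1 < p.2.2 ∧ ∀ v ∈ plaqVerts p, v ∈ cubeV a w

/-- A spin configuration on the edges of the cube (`true` = spin `+1`, `false` = spin `-1`). -/
abbrev Config (a : V4) (w : ℕ) := {e : Edge // e ∈ cubeEdges a w} → Bool

/-- The ±1 spin value of a Boolean. -/
def boolSpin (b : Bool) : ℝ := if b then 1 else -1

/-- Extension of a configuration on a cube to all of `ℤ⁴`, putting spin `1` outside. -/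
noncomputable def extSpin (a : V4) (w : ℕ) (σ : Config a w) : Edge → ℝ :=
  fun e => if h : e ∈ cubeEdges a w then boolSpin (σ ⟨e, h⟩) else 1

/-- `∑_{p ∈ P(B)} σ_p`, i.e. minus the Hamiltonian of the configuration `σ` on the cube. -/
noncomputable def energy (a : V4) (w : ℕ) (σ : Config a w) : ℝ :=
  ∑ p ∈ cubePlaqs a w, plaqSpin (extSpin a w σ) p

/-- Expectation `⟨f⟩` in Ising lattice gauge theory on the cube with corner `a` and width `w`,
at inverse coupling strength `β`, with free boundary condition. -/
noncomputable def gibbsExp (a : V4) (w : ℕ) (β : ℝ) (f : (Edge → ℝ) → ℝ) : ℝ :=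
  (∑ σ : Config a w, f (extSpin a w σ) * Real.exp (β * energy a w σ)) /
    (∑ σ : Config a w, Real.exp (β * energy a w σ))

/-- Expectation `⟨f⟩_{N,β}` in Ising lattice gauge theory on `B_N = [-N,N]⁴ ∩ ℤ⁴`
at inverse coupling strength `β`, with free boundary condition. -/
noncomputable def gibbsExpN (N : ℕ) (β : ℝ) (f : (Edge → ℝ) → ℝ) : ℝ :=
  gibbsExp (fun _ => -(N : ℤ)) (2 * N) β f

/-- The Wilson loop observable `W_γ = ∏_{e ∈ γ} σ_e`. -/
def wilson (γ : Finset Edge) (σ : Edge → ℝ) : ℝ := ∏ e ∈ γ, σ e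

/-- `γ` is a generalized loop: a nonempty finite set of edges such that every vertex of `ℤ⁴`
belongs to an even number of edges of `γ` (equivalently, a finite union of pairwise
edge-disjoint self-avoiding loops). -/
def IsGenLoop (γ : Finset Edge) : Prop :=
  γ.Nonempty ∧ ∀ v : V4, Even (γ.filter (fun e => v ∈ edgeVerts e)).card

/-- `e` is a corner edge of `γ`: some other edge `e' ∈ γ` shares a common plaquette with `e`. -/
def IsCornerEdge (γ : Finset Edge) (e : Edge) : Prop :=
  e ∈ γ ∧ ∃ e' ∈ γ, e' ≠ e ∧ ∃ p : Plaq, p.2.1 < p.2.2 ∧ e ∈ plaqEdges p ∧ e' ∈ plaqEdges p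

/-- The number of corner edges of `γ`. -/
noncomputable def cornerCount (γ : Finset Edge) : ℕ :=
  {e ∈ (γ : Set Edge) | IsCornerEdge γ e}.ncard

open MeasureTheory

/-- Extension of a configuration on a cube to all of `ℤ⁴`, by spin `+1` (`true`) outside. -/
noncomputable def extBool (a : V4) (w : ℕ) (σ : Config a w) : Edge → Bool :=
  fun e => if h : e ∈ cubeEdges a w then σ ⟨e, h⟩ else true

/-- Ising lattice gauge theory on `B_N = [-N,N]⁴ ∩ ℤ⁴` at inverse coupling strength `β` with
free boundary condition, lifted to a probability measure on the space
`Σ = {-1,1}^{E(ℤ⁴)}` (encoded as `Edge → Bool`) of spin configurations on all of `ℤ⁴` by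
setting `σ_e = 1` outside `E_N`. -/
noncomputable def gibbsMeasureN (N : ℕ) (β : ℝ) : Measure (Edge → Bool) :=
  (∑ σ : Config (fun _ => -(N : ℤ)) (2 * N),
      ENNReal.ofReal (Real.exp (β * energy (fun _ => -(N : ℤ)) (2 * N) σ)))⁻¹ •
    ∑ σ : Config (fun _ => -(N : ℤ)) (2 * N),
      ENNReal.ofReal (Real.exp (β * energy (fun _ => -(N : ℤ)) (2 * N) σ)) •
        Measure.dirac (extBool (fun _ => -(N : ℤ)) (2 * N) σ)

/-- `μ` is a subsequential weak limit, as `N → ∞`, of the finite-volume Ising lattice gauge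
measures on `Σ = {-1,1}^{E(ℤ⁴)}` (with its product topology) at inverse coupling `β`. -/
def IsGibbsLimit (β : ℝ) (μ : Measure (Edge → Bool)) : Prop :=
  IsProbabilityMeasure μ ∧
    ∃ φ : ℕ → ℕ, StrictMono φ ∧
      ∀ f : (Edge → Bool) → ℝ, Continuous f →
        Filter.Tendsto (fun k => ∫ x, f x ∂gibbsMeasureN (φ k) β)
          Filter.atTop (nhds (∫ x, f x ∂μ))

/-- The plaquette variable `σ_p` of a configuration `x : Edge → Bool`. -/
noncomputable def plaqSpinB (x : Edge → Bool) (p : Plaq) : ℝ :=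
  plaqSpin (fun e => boolSpin (x e)) p

/-!
The dual lattice `*ℤ⁴` is identified with `ℤ⁴`: the dual vertex `y = z + (1/2,1/2,1/2,1/2)`
(the center of the unit 4-cell with base vertex `z`) is identified with the integer point
`z`, and cells of the dual lattice (which span in the negative coordinate directions from
their dual base vertex) are recorded by their lowest corner, so that plaquettes of the dual
lattice are again elements of `Plaq`.
-/

/-- The two directions of `Fin 4` complementary to `{i, j}`. -/
def compl2 (i j : Fin 4) : Finset (Fin 4) := Finset.univ \ {i, j}

lemma compl2_nonempty (i j : Fin 4) : (compl2 i j).Nonempty := by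
  have h2 : ({i, j} : Finset (Fin 4)).card ≤ 2 := by
    refine le_trans (Finset.card_insert_le _ _) ?_
    simp
  rw [compl2, Finset.sdiff_nonempty]
  intro hsub
  have h4 := Finset.card_le_card hsub
  simp [Finset.card_univ] at h4
  omega

/-- The Hodge dual of the plaquette `(x, i, j)` of `ℤ⁴`: the plaquette of the dual lattice
spanned by the two complementary directions `k < l`, which (as an unoriented square, in the
integer coordinates for `*ℤ⁴` described above) has lowest corner `x - e_k - e_l`. -/
def dualPlaq (p : Plaq) : Plaq :=
  let k := (compl2 p.2.1 p.2.2).min' (compl2_nonempty _ _)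
  let l := (compl2 p.2.1 p.2.2).max' (compl2_nonempty _ _)
  (p.1 - unitVec k - unitVec l, k, l)

/-- The boundary of a surface (set of plaquettes): the set of edges contained in an odd
number of plaquettes of the surface. -/
def surfBdry (S : Set Plaq) : Set Edge :=
  {e | Odd {p | p ∈ S ∧ e ∈ plaqEdges p}.ncard}

/-- A surface is closed if its boundary is empty. -/
def SurfClosed (S : Set Plaq) : Prop := surfBdry S = ∅

/-- The dual surface `*S`: the set of Hodge duals of the plaquettes of `S`. -/
def dualSurf (S : Set Plaq) : Set Plaq := dualPlaq '' S

/-- Two plaquettes are adjacent if they share a common edge. -/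
def PlaqAdj (p q : Plaq) : Prop := p ≠ q ∧ (plaqEdges p ∩ plaqEdges q).Nonempty

/-- A surface is connected if it is connected with respect to adjacency of plaquettes. -/
def SurfConnected (S : Set Plaq) : Prop :=
  ∀ p ∈ S, ∀ q ∈ S, Relation.ReflTransGen (fun u v => u ∈ S ∧ v ∈ S ∧ PlaqAdj u v) p q

/-- The set of negative plaquettes of the configuration `x` (those with `σ_p = -1`). -/
noncomputable def negPlaqs (x : Edge → Bool) : Set Plaq :=
  {p | p.2.1 < p.2.2 ∧ plaqSpin (fun e => boolSpin (x e)) p = -1}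

/-- A vortex of the configuration `x`: a nonempty surface all of whose plaquettes are
negative plaquettes of `x`, such that the dual surface is closed and connected. -/
noncomputable def IsVortex (x : Edge → Bool) (S : Set Plaq) : Prop :=
  S.Nonempty ∧ (∀ p ∈ S, p ∈ negPlaqs x) ∧
    SurfClosed (dualSurf S) ∧ SurfConnected (dualSurf S)


/-! Peierls argument. Splitting the plaquettes of a finite set `T` off the Hamiltonian, the event
"all of `T` negative" loses a factor `e^{-β|T|}` and the event "all of `T` positive" gains one;
by Griffiths' first inequality for the remaining interaction, the first event is no more likely
than the second. Hence all of `T` is negative with probability at most `e^{-2β|T|}`, uniformly in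
the volume, and this passes to weak limits because the event is clopen. A vortex through `p` of
size at least `m` is connected under adjacency of the dual plaquettes, so it contains `m`
negative plaquettes in a box of side `O(m)` around `p`; a union bound over the `m`-subsets of that
box gives `C_m e^{-2βm}`. -/

open Finset Real

lemma boolSpin_eq_one_or_neg_one (b : Bool) : boolSpin b = 1 ∨ boolSpin b = -1 := by
  cases b <;> simp [boolSpin]

lemma plaqSpin_eq_one_or_neg_one {s : Edge → ℝ} (hs : ∀ e, s e = 1 ∨ s e = -1) (p : Plaq) :
    plaqSpin s p = 1 ∨ plaqSpin s p = -1 := by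
  have hsq : ∀ e, s e * s e = 1 := fun e => mul_self_eq_one_iff.2 (hs e)
  rw [← mul_self_eq_one_iff, plaqSpin]
  calc _ = (s (p.1, p.2.1) * s (p.1, p.2.1)) * (s (p.1, p.2.2) * s (p.1, p.2.2)) *
        (s (p.1 + unitVec p.2.1, p.2.2) * s (p.1 + unitVec p.2.1, p.2.2)) *
        (s (p.1 + unitVec p.2.2, p.2.1) * s (p.1 + unitVec p.2.2, p.2.1)) := by ring
    _ = 1 := by simp only [hsq, mul_one]

lemma sum_sum_mul_nonneg {α κ : Type*} [Fintype α] {J : Finset κ} {c : κ → ℝ} {g : κ → α → ℝ}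
    (hc : ∀ j ∈ J, 0 ≤ c j) (hg : ∀ j ∈ J, 0 ≤ ∑ x, g j x) :
    0 ≤ ∑ x, ∑ j ∈ J, c j * g j x := by
  rw [sum_comm]
  exact sum_nonneg fun j hj => by rw [← mul_sum]; exact mul_nonneg (hc j hj) (hg j hj)

lemma sum_prod_boolSpin_pow_nonneg {ι : Type*} [Fintype ι] [DecidableEq ι] (n : ι → ℕ) :
    0 ≤ ∑ σ : ι → Bool, ∏ i, boolSpin (σ i) ^ n i := by
  rw [← Fintype.prod_sum (fun i (b : Bool) => boolSpin b ^ n i)]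
  refine prod_nonneg fun i _ => ?_
  rcases neg_one_pow_eq_or ℝ (n i) with h | h <;> simp [boolSpin, h]

lemma prod_one_add_div_two_sub_prod_one_sub_div_two {ι R : Type*} [Field R] (T : Finset ι)
    (y : ι → R) :
    ∏ i ∈ T, (1 + y i) / 2 - ∏ i ∈ T, (1 - y i) / 2 =
      ∑ B ∈ T.powerset, (1 - (-1) ^ #B) / 2 ^ #T * ∏ i ∈ B, y i := by
  classical
  have hplus := prod_add y (fun _ => (1 : R)) T
  have hminus := prod_add (fun i => -y i) (fun _ => (1 : R)) T
  simp only [prod_const_one, mul_one, prod_neg] at hplus hminus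
  simp only [prod_div_distrib, prod_const, ← sub_div, add_comm (1 : R), sub_eq_neg_add (1 : R),
    hplus, hminus, ← sum_sub_distrib, sum_div]
  refine sum_congr rfl fun B _ => by ring

lemma exp_mul_eq_mul_sinh_add_cosh {x : ℝ} (hx : x = 1 ∨ x = -1) (β : ℝ) :
    exp (β * x) = x * sinh β + cosh β := by
  rcases hx with rfl | rfl
  · rw [mul_one, one_mul, add_comm, cosh_add_sinh]
  · rw [mul_neg_one, ← cosh_sub_sinh]; ring

def plaqEdgesMultiset (p : Plaq) : Multiset Edge :=
  {(p.1, p.2.1), (p.1, p.2.2), (p.1 + unitVec p.2.1, p.2.2), (p.1 + unitVec p.2.2, p.2.1)}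

section FiniteVolume

variable {a : V4} {w : ℕ}

lemma extSpin_eq_one_or_neg_one (σ : Config a w) (e : Edge) :
    extSpin a w σ e = 1 ∨ extSpin a w σ e = -1 := by
  unfold extSpin
  split
  · exact boolSpin_eq_one_or_neg_one _
  · exact Or.inl rfl

lemma prod_plaqSpin_eq_prod_bind (s : Edge → ℝ) (B : Finset Plaq) :
    ∏ q ∈ B, plaqSpin s q = ((B.val.bind plaqEdgesMultiset).map s).prod := by
  rw [Multiset.map_bind, Multiset.prod_bind, prod_eq_multiset_prod]
  congr 1
  refine Multiset.map_congr rfl fun q _ => ?_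
  simp [plaqSpin, plaqEdgesMultiset, mul_assoc]

lemma prod_map_extSpin (σ : Config a w) (L : Multiset Edge) :
    (L.map (extSpin a w σ)).prod =
      ∏ e : {e // e ∈ cubeEdges a w}, boolSpin (σ e) ^ L.count (e : Edge) := by
  have hcube : ∏ e : {e // e ∈ cubeEdges a w}, boolSpin (σ e) ^ L.count (e : Edge) =
      ∏ e ∈ cubeEdges a w, extSpin a w σ e ^ L.count e := by
    rw [← prod_attach (cubeEdges a w), univ_eq_attach]
    exact prod_congr rfl fun e _ => by simp [extSpin, e.2]
  rw [hcube, prod_multiset_map_count]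
  have hL := prod_subset (f := fun e => extSpin a w σ e ^ L.count e)
    (subset_union_left (s₁ := L.toFinset) (s₂ := cubeEdges a w)) fun e _ he => by
      rw [Multiset.count_eq_zero.2 (by simpa using he), pow_zero]
  have hC := prod_subset (f := fun e => extSpin a w σ e ^ L.count e)
    (subset_union_right (s₁ := L.toFinset) (s₂ := cubeEdges a w)) fun e _ he => by
      simp [extSpin, he]
  rw [hL, hC]

lemma sum_prod_extSpin_nonneg (L : Multiset Edge) :
    0 ≤ ∑ σ : Config a w, (L.map (extSpin a w σ)).prod := by
  simp_rw [prod_map_extSpin]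
  exact sum_prod_boolSpin_pow_nonneg _

/-- Griffiths' first inequality. -/
theorem sum_prod_extSpin_mul_exp_nonneg {β : ℝ} (hβ : 0 ≤ β) (L : Multiset Edge)
    (Q : Finset Plaq) :
    0 ≤ ∑ σ : Config a w, (L.map (extSpin a w σ)).prod *
      exp (β * ∑ q ∈ Q, plaqSpin (extSpin a w σ) q) := by
  have hexpand : ∀ σ : Config a w, (L.map (extSpin a w σ)).prod *
      exp (β * ∑ q ∈ Q, plaqSpin (extSpin a w σ) q) =
        ∑ B ∈ Q.powerset, sinh β ^ #B * cosh β ^ #(Q \ B) *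
          ((L + B.val.bind plaqEdgesMultiset).map (extSpin a w σ)).prod := by
    intro σ
    rw [mul_sum, exp_sum, prod_congr rfl fun q _ =>
      exp_mul_eq_mul_sinh_add_cosh (plaqSpin_eq_one_or_neg_one (extSpin_eq_one_or_neg_one σ) q) β,
      prod_add, mul_sum]
    refine sum_congr rfl fun B _ => ?_
    rw [prod_mul_distrib, prod_const, prod_const, prod_plaqSpin_eq_prod_bind, Multiset.map_add,
      Multiset.prod_add]
    ring
  simp_rw [hexpand]
  exact sum_sum_mul_nonneg
    (fun B _ => mul_nonneg (pow_nonneg (sinh_nonneg_iff.2 hβ) _) (pow_nonneg (cosh_pos β).le _))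
    fun B _ => sum_prod_extSpin_nonneg _

theorem sum_prod_one_sub_mul_exp_le_sum_prod_one_add {β : ℝ} (hβ : 0 ≤ β)
    (T Q : Finset Plaq) :
    ∑ σ : Config a w, (∏ q ∈ T, (1 - plaqSpin (extSpin a w σ) q) / 2) *
        exp (β * ∑ q ∈ Q, plaqSpin (extSpin a w σ) q) ≤
      ∑ σ : Config a w, (∏ q ∈ T, (1 + plaqSpin (extSpin a w σ) q) / 2) *
        exp (β * ∑ q ∈ Q, plaqSpin (extSpin a w σ) q) := by
  rw [← sub_nonneg, ← sum_sub_distrib]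
  simp_rw [← sub_mul, prod_one_add_div_two_sub_prod_one_sub_div_two, sum_mul, mul_assoc,
    prod_plaqSpin_eq_prod_bind]
  refine sum_sum_mul_nonneg (fun B _ => ?_) fun B _ => sum_prod_extSpin_mul_exp_nonneg hβ _ Q
  rcases neg_one_pow_eq_or ℝ #B with h | h <;> rw [h] <;> positivity

lemma mul_exp_eq_of_eq_one_or_neg_one {x : ℝ} (hx : x = 1 ∨ x = -1) (β : ℝ) :
    (1 - x) / 2 * exp (β * x) = (1 - x) / 2 * exp (-β) ∧
      (1 + x) / 2 * exp (β * x) = (1 + x) / 2 * exp β := by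
  rcases hx with rfl | rfl <;> norm_num

lemma prod_mul_exp_sum {ι : Type*} (T : Finset ι) (g x : ι → ℝ) (β c : ℝ)
    (h : ∀ i ∈ T, g i * exp (β * x i) = g i * exp c) :
    (∏ i ∈ T, g i) * exp (β * ∑ i ∈ T, x i) = (∏ i ∈ T, g i) * exp (c * #T) := by
  rw [mul_sum, exp_sum, ← prod_mul_distrib, prod_congr rfl h, prod_mul_distrib, prod_const,
    ← exp_nat_mul, mul_comm c]

theorem sum_prod_one_sub_mul_exp_energy_le {β : ℝ} (hβ : 0 ≤ β) {T : Finset Plaq}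
    (hT : T ⊆ cubePlaqs a w) :
    ∑ σ : Config a w, (∏ q ∈ T, (1 - plaqSpin (extSpin a w σ) q) / 2) * exp (β * energy a w σ) ≤
      exp (-2 * β * #T) * ∑ σ : Config a w, exp (β * energy a w σ) := by
  set x : Config a w → Plaq → ℝ := fun σ q => plaqSpin (extSpin a w σ) q
  have hx σ q : x σ q = 1 ∨ x σ q = -1 :=
    plaqSpin_eq_one_or_neg_one (extSpin_eq_one_or_neg_one σ) q
  set H : Config a w → ℝ := fun σ => ∑ q ∈ cubePlaqs a w \ T, x σ q
  have hE σ : exp (β * energy a w σ) = exp (β * ∑ q ∈ T, x σ q) * exp (β * H σ) := by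
    rw [← exp_add, ← mul_add, energy, ← sum_sdiff hT, add_comm]
  have hneg σ : (∏ q ∈ T, (1 - x σ q) / 2) * exp (β * energy a w σ) =
      exp (-β * #T) * ((∏ q ∈ T, (1 - x σ q) / 2) * exp (β * H σ)) := by
    rw [hE, ← mul_assoc, prod_mul_exp_sum T _ _ β (-β)
      fun q _ => (mul_exp_eq_of_eq_one_or_neg_one (hx σ q) β).1]
    ring
  have hpos σ : (∏ q ∈ T, (1 + x σ q) / 2) * exp (β * energy a w σ) =
      exp (β * #T) * ((∏ q ∈ T, (1 + x σ q) / 2) * exp (β * H σ)) := by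
    rw [hE, ← mul_assoc, prod_mul_exp_sum T _ _ β β
      fun q _ => (mul_exp_eq_of_eq_one_or_neg_one (hx σ q) β).2]
    ring
  calc ∑ σ, (∏ q ∈ T, (1 - x σ q) / 2) * exp (β * energy a w σ)
      = exp (-β * #T) * ∑ σ, (∏ q ∈ T, (1 - x σ q) / 2) * exp (β * H σ) := by
        rw [mul_sum]; exact sum_congr rfl fun σ _ => hneg σ
    _ ≤ exp (-β * #T) * ∑ σ, (∏ q ∈ T, (1 + x σ q) / 2) * exp (β * H σ) :=
        mul_le_mul_of_nonneg_left (sum_prod_one_sub_mul_exp_le_sum_prod_one_add hβ T _)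
          (exp_nonneg _)
    _ = exp (-β * #T) * (exp (-β * #T) *
          ∑ σ, (∏ q ∈ T, (1 + x σ q) / 2) * exp (β * energy a w σ)) := by
        refine congrArg (exp (-β * #T) * ·) ?_
        rw [mul_sum]
        refine sum_congr rfl fun σ _ => ?_
        rw [hpos, ← mul_assoc, ← exp_add, neg_mul, neg_add_cancel, exp_zero, one_mul]
    _ ≤ exp (-β * #T) * (exp (-β * #T) * ∑ σ : Config a w, exp (β * energy a w σ)) := by
        gcongr with σ
        refine mul_le_of_le_one_left (exp_nonneg _) (prod_le_one (fun q _ => ?_) fun q _ => ?_) <;>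
          rcases hx σ q with h | h <;> norm_num [h]
    _ = exp (-2 * β * #T) * ∑ σ : Config a w, exp (β * energy a w σ) := by
        rw [← mul_assoc, ← exp_add]; ring_nf

end FiniteVolume

open MeasureTheory Filter

lemma plaqSpinB_extBool {a : V4} {w : ℕ} (σ : Config a w) (q : Plaq) :
    plaqSpinB (extBool a w σ) q = plaqSpin (extSpin a w σ) q := by
  have : (fun e => boolSpin (extBool a w σ e)) = extSpin a w σ := by
    funext e
    unfold extBool extSpin
    split <;> rfl
  rw [plaqSpinB, this]

lemma integral_gibbsMeasureN (N : ℕ) (β : ℝ) (f : (Edge → Bool) → ℝ) :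
    ∫ x, f x ∂gibbsMeasureN N β =
      (∑ σ, f (extBool _ _ σ) * exp (β * energy (fun _ => -(N : ℤ)) (2 * N) σ)) /
        ∑ σ, exp (β * energy (fun _ => -(N : ℤ)) (2 * N) σ) := by
  rw [gibbsMeasureN, integral_smul_measure, integral_finsetSum_measure fun σ _ =>
    (integrable_dirac (by simp)).smul_measure ENNReal.ofReal_ne_top]
  simp only [integral_smul_measure, integral_dirac, ENNReal.toReal_inv,
    ENNReal.toReal_sum fun σ _ => ENNReal.ofReal_ne_top, ENNReal.toReal_ofReal (exp_nonneg _),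
    smul_eq_mul, div_eq_inv_mul, mul_comm (f _)]

theorem IsGibbsLimit.integral_le_of_eventually_le {β : ℝ} {μ : Measure (Edge → Bool)}
    (hμ : IsGibbsLimit β μ) {f : (Edge → Bool) → ℝ} (hf : Continuous f) {c : ℝ}
    (h : ∀ᶠ N in atTop, ∫ x, f x ∂gibbsMeasureN N β ≤ c) : ∫ x, f x ∂μ ≤ c := by
  obtain ⟨-, φ, hφ, hlim⟩ := hμ
  exact le_of_tendsto (hlim f hf) (hφ.tendsto_atTop.eventually h)

lemma eventually_mem_cubePlaqs {q : Plaq} (hq : q.2.1 < q.2.2) :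
    ∀ᶠ N : ℕ in atTop, q ∈ cubePlaqs (fun _ => -(N : ℤ)) (2 * N) := by
  refine eventually_atTop.2 ⟨∑ i, (q.1 i).natAbs + 2, fun N hN => ?_⟩
  have hcoord i : |q.1 i| + 2 ≤ N := by
    have := single_le_sum (fun i _ => Nat.zero_le _) (mem_univ i) (f := fun i => (q.1 i).natAbs)
    rw [Int.abs_eq_natAbs]; omega
  have hverts : ∀ v ∈ plaqVerts q, v ∈ cubeV (fun _ => -(N : ℤ)) (2 * N) := by
    intro v hv
    simp only [cubeV, Fintype.mem_piFinset, mem_Icc]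
    intro i
    have := hcoord i
    have := neg_abs_le (q.1 i)
    have := le_abs_self (q.1 i)
    simp only [plaqVerts, mem_insert, mem_singleton] at hv
    rcases hv with rfl | rfl | rfl | rfl <;> (try simp only [Pi.add_apply, unitVec]) <;>
      (try split_ifs) <;> push_cast <;> constructor <;> linarith
  simp only [cubePlaqs, mem_filter, mem_product, mem_univ, and_true]
  exact ⟨hverts q.1 (mem_insert_self _ _), hq, hverts⟩

noncomputable def negIndicator (T : Finset Plaq) (x : Edge → Bool) : ℝ :=
  ∏ q ∈ T, (1 - plaqSpinB x q) / 2

lemma continuous_negIndicator (T : Finset Plaq) : Continuous (negIndicator T) := by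
  have hspin e : Continuous fun x : Edge → Bool => boolSpin (x e) :=
    (continuous_of_discreteTopology (f := boolSpin)).comp (continuous_apply e)
  refine continuous_finsetProd _ fun q _ => (continuous_const.sub ?_).div_const 2
  exact (((hspin _).mul (hspin _)).mul (hspin _)).mul (hspin _)

lemma negIndicator_eq_indicator {T : Finset Plaq} (hT : ∀ q ∈ T, q.2.1 < q.2.2) :
    negIndicator T = {x | ↑T ⊆ negPlaqs x}.indicator 1 := by
  funext x
  by_cases hx : ∀ q ∈ T, plaqSpinB x q = -1
  · rw [Set.indicator_of_mem fun q hq => ⟨hT q hq, hx q hq⟩, Pi.one_apply]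
    exact prod_eq_one fun q hq => by rw [hx q hq]; norm_num
  · push Not at hx
    obtain ⟨q, hq, hne⟩ := hx
    rw [Set.indicator_of_notMem fun h => hne (h hq).2]
    have hpos : plaqSpinB x q = 1 :=
      (plaqSpin_eq_one_or_neg_one (fun e => boolSpin_eq_one_or_neg_one (x e)) q).resolve_right hne
    exact prod_eq_zero hq (by rw [hpos]; norm_num)

lemma integral_negIndicator_gibbsMeasureN_le {N : ℕ} {β : ℝ} (hβ : 0 ≤ β) {T : Finset Plaq}
    (hT : T ⊆ cubePlaqs (fun _ => -(N : ℤ)) (2 * N)) :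
    ∫ x, negIndicator T x ∂gibbsMeasureN N β ≤ exp (-2 * β * #T) := by
  rw [integral_gibbsMeasureN, div_le_iff₀ (sum_pos (fun σ _ => exp_pos _) univ_nonempty)]
  simp only [negIndicator, plaqSpinB_extBool]
  exact sum_prod_one_sub_mul_exp_energy_le hβ hT

theorem IsGibbsLimit.measureReal_subset_negPlaqs_le {β : ℝ} {μ : Measure (Edge → Bool)}
    (hμ : IsGibbsLimit β μ) (hβ : 0 ≤ β) (T : Finset Plaq) :
    μ.real {x | ↑T ⊆ negPlaqs x} ≤ exp (-2 * β * #T) := by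
  by_cases hT : ∀ q ∈ T, q.2.1 < q.2.2
  · have hevent : {x | ↑T ⊆ negPlaqs x} = negIndicator T ⁻¹' {1} := by
      ext x
      by_cases hx : x ∈ {x | ↑T ⊆ negPlaqs x} <;> simp_all [negIndicator_eq_indicator hT]
    have hmeas : MeasurableSet {x | ↑T ⊆ negPlaqs x} :=
      hevent ▸ (isClosed_singleton.preimage (continuous_negIndicator T)).measurableSet
    rw [← integral_indicator_one hmeas, ← negIndicator_eq_indicator hT]
    exact hμ.integral_le_of_eventually_le (continuous_negIndicator T)
      (((eventually_all_finset T).2 fun q hq => eventually_mem_cubePlaqs (hT q hq)).mono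
        fun N hN => integral_negIndicator_gibbsMeasureN_le hβ hN)
  · push Not at hT
    obtain ⟨q, hq, hnot⟩ := hT
    have hempty : {x | ↑T ⊆ negPlaqs x} = ∅ :=
      Set.eq_empty_of_forall_notMem fun x hx => hnot.not_gt (hx hq).1
    rw [hempty, measureReal_empty]
    positivity

lemma Relation.ReflTransGen.exists_mem_notMem {α : Type*} {r : α → α → Prop} {s : Set α}
    {a b : α} (h : Relation.ReflTransGen r a b) (ha : a ∈ s) (hb : b ∉ s) :
    ∃ u ∈ s, ∃ v ∉ s, r u v := by
  induction h with
  | refl => exact absurd ha hb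
  | @tail c d _ hcd ih => by_cases hc : c ∈ s; exacts [⟨c, hc, d, hb, hcd⟩, ih hc]

lemma Relation.ReflTransGen.of_image {α β : Type*} {f : α → β} {S : Set α} (hf : S.InjOn f)
    {R : β → β → Prop} {p q : α} (hp : p ∈ S) (hq : q ∈ S)
    (h : Relation.ReflTransGen (fun u v => u ∈ f '' S ∧ v ∈ f '' S ∧ R u v) (f p) (f q)) :
    Relation.ReflTransGen (fun u v => u ∈ S ∧ v ∈ S ∧ R (f u) (f v)) p q := by
  suffices ∀ b, Relation.ReflTransGen (fun u v => u ∈ f '' S ∧ v ∈ f '' S ∧ R u v) (f p) b →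
      ∀ r ∈ S, f r = b → Relation.ReflTransGen (fun u v => u ∈ S ∧ v ∈ S ∧ R (f u) (f v)) p r from
    this _ h q hq rfl
  intro b hb
  induction hb with
  | refl => exact fun r hr hfr => hf hr hp hfr ▸ Relation.ReflTransGen.refl
  | tail _ hcd ih =>
    obtain ⟨⟨u, hu, rfl⟩, -, hadj⟩ := hcd
    rintro r hr rfl
    exact (ih u hu rfl).tail ⟨hu, hr, hadj⟩

theorem exists_finset_subset_card_eq {α : Type*} {R : α → α → Prop} {S : Set α} {p : α}
    (hp : p ∈ S) (hS : ∀ q ∈ S, Relation.ReflTransGen (fun u v => u ∈ S ∧ v ∈ S ∧ R u v) p q)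
    {B : ℕ → Set α} (hB0 : p ∈ B 0) (hBmono : Monotone B)
    (hB : ∀ k u v, u ∈ B k → R u v → v ∈ B (k + 1)) {k : ℕ}
    (hk : ((k + 1 : ℕ) : ℕ∞) ≤ S.encard) :
    ∃ T : Finset α, p ∈ T ∧ ↑T ⊆ S ∧ ↑T ⊆ B k ∧ #T = k + 1 := by
  classical
  induction k with
  | zero => exact ⟨{p}, by simp, by simpa using hp, by simpa using hB0, rfl⟩
  | succ k ih =>
    obtain ⟨T, hpT, hTS, hTB, hcard⟩ := ih (le_trans (by norm_cast; omega) hk)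
    obtain ⟨q, hqS, hqT⟩ : (S \ T).Nonempty := by
      refine Set.sdiff_nonempty.2 fun hST => ?_
      have := hk.trans (Set.encard_le_encard hST)
      rw [Set.encard_coe_eq_coe_finsetCard, hcard] at this
      norm_cast at this; omega
    obtain ⟨u, huT, v, hvT, -, hvS, huv⟩ := (hS q hqS).exists_mem_notMem hpT hqT
    refine ⟨insert v T, mem_insert_of_mem hpT, ?_, ?_, by rw [card_insert_of_notMem hvT, hcard]⟩
    · rw [coe_insert]; exact Set.insert_subset hvS hTS
    · rw [coe_insert]
      exact Set.insert_subset (hB k u v (hTB huT) huv) (hTB.trans (hBmono k.le_succ))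

lemma dualPlaq_injOn : {p : Plaq | p.2.1 < p.2.2}.InjOn dualPlaq := by
  rintro ⟨x, i, j⟩ hij ⟨y, i', j'⟩ hij' h
  have hdir : ∀ i j i' j' : Fin 4, i < j → i' < j' →
      (compl2 i j).min' (compl2_nonempty i j) = (compl2 i' j').min' (compl2_nonempty i' j') →
      (compl2 i j).max' (compl2_nonempty i j) = (compl2 i' j').max' (compl2_nonempty i' j') →
      i = i' ∧ j = j' := by decide
  obtain ⟨rfl, rfl⟩ := hdir i j i' j' hij hij' (congrArg (·.2.1) h) (congrArg (·.2.2) h)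
  simpa [dualPlaq] using congrArg Prod.fst h

noncomputable def plaqBox (c : V4) (r : ℕ) : Finset Plaq :=
  cubeV (fun i => c i - r) (2 * r) ×ˢ univ

lemma mem_plaqBox {c : V4} {r : ℕ} {q : Plaq} :
    q ∈ plaqBox c r ↔ ∀ i, c i - r ≤ q.1 i ∧ q.1 i ≤ c i + r := by
  simp only [plaqBox, mem_product, cubeV, Fintype.mem_piFinset, mem_Icc, mem_univ, and_true]
  refine forall_congr' fun i => and_congr_right' ?_
  push_cast; constructor <;> intro h <;> linarith

lemma card_plaqBox (c : V4) (r : ℕ) : #(plaqBox c r) = (2 * r + 1) ^ 4 * 16 := by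
  have hside i : (c i - r + (2 * r : ℕ) + 1 - (c i - r)).toNat = 2 * r + 1 := by omega
  simp only [plaqBox, cubeV, card_product, Fintype.card_piFinset, Int.card_Icc, hside, prod_const,
    card_univ, Fintype.card_fin, Fintype.card_prod]

lemma fst_le_of_mem_plaqEdges {e : Edge} {P : Plaq} (h : e ∈ plaqEdges P) (i : Fin 4) :
    P.1 i ≤ e.1 i + 1 ∧ e.1 i ≤ P.1 i + 1 := by
  simp only [plaqEdges, mem_insert, mem_singleton] at h
  rcases h with rfl | rfl | rfl | rfl <;> (try simp only [Pi.add_apply, unitVec]) <;>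
    (try split_ifs) <;> omega

lemma dualPlaq_fst_le (P : Plaq) (i : Fin 4) :
    P.1 i - 2 ≤ (dualPlaq P).1 i ∧ (dualPlaq P).1 i ≤ P.1 i := by
  simp only [dualPlaq, Pi.sub_apply, unitVec]
  split_ifs <;> omega

lemma fst_le_of_plaqAdj_dualPlaq {u v : Plaq} (h : PlaqAdj (dualPlaq u) (dualPlaq v))
    (i : Fin 4) : u.1 i ≤ v.1 i + 4 ∧ v.1 i ≤ u.1 i + 4 := by
  obtain ⟨-, e, he⟩ := h
  rw [mem_inter] at he
  have := fst_le_of_mem_plaqEdges he.1 i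
  have := fst_le_of_mem_plaqEdges he.2 i
  have := dualPlaq_fst_le u i
  have := dualPlaq_fst_le v i
  omega

lemma plaqBox_mono (c : V4) : Monotone (plaqBox c) := by
  intro r r' hr q hq
  rw [mem_plaqBox] at hq ⊢
  intro i
  have := hq i
  have : (r : ℤ) ≤ r' := by exact_mod_cast hr
  omega

lemma mem_plaqBox_add_of_plaqAdj_dualPlaq {c : V4} {r : ℕ} {u v : Plaq} (hu : u ∈ plaqBox c r)
    (huv : PlaqAdj (dualPlaq u) (dualPlaq v)) : v ∈ plaqBox c (r + 4) := by
  rw [mem_plaqBox] at hu ⊢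
  intro i
  have := hu i
  have := fst_le_of_plaqAdj_dualPlaq huv i
  push_cast
  omega

theorem IsVortex.exists_subset_plaqBox {x : Edge → Bool} {S : Set Plaq} (hS : IsVortex x S)
    {p : Plaq} (hp : p ∈ S) {k : ℕ} (hk : ((k + 1 : ℕ) : ℕ∞) ≤ S.encard) :
    ∃ T : Finset Plaq, ↑T ⊆ S ∧ T ⊆ plaqBox p.1 (4 * k) ∧ #T = k + 1 := by
  obtain ⟨-, hneg, -, hconn⟩ := hS
  have hinj : S.InjOn dualPlaq := dualPlaq_injOn.mono fun q hq => (hneg q hq).1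
  obtain ⟨T, -, hTS, hTB, hcard⟩ := exists_finset_subset_card_eq hp
    (fun q hq => (hconn _ ⟨p, hp, rfl⟩ _ ⟨q, hq, rfl⟩).of_image hinj hp hq)
    (B := fun k => ↑(plaqBox p.1 (4 * k))) (by simp [mem_plaqBox])
    (fun k l hkl => coe_subset.2 (plaqBox_mono _ (by omega)))
    (fun k u v hu huv => mem_plaqBox_add_of_plaqAdj_dualPlaq hu huv) hk
  exact ⟨T, hTS, hTB, hcard⟩

/-- **Corollary 6.2 (Rarity of large vortices).**
There is `β₀ > 0` such that the following holds whenever `β ≥ β₀`.  Let `μ_β` be any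
subsequential weak limit of the finite-volume Ising lattice gauge measures.  For any
`m ≥ 1` there is a constant `C_m`, depending only on `m`, such that for any plaquette `p`,
the `μ_β`-probability that `p` is contained in a vortex of size at least `m` is at most
`C_m e^{-2βm}`. -/
theorem rarity_of_large_vortices :
    ∃ β₀ : ℝ, 0 < β₀ ∧
      ∀ m : ℕ, 1 ≤ m →
        ∃ Cm : ℝ, 0 < Cm ∧
          ∀ β : ℝ, β₀ ≤ β →
          ∀ μ : MeasureTheory.Measure (Edge → Bool), IsGibbsLimit β μ →
          ∀ p : Plaq, p.2.1 < p.2.2 →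
            (μ {x | ∃ S : Set Plaq, IsVortex x S ∧ p ∈ S ∧ (m : ℕ∞) ≤ S.encard}).toReal ≤
              Cm * Real.exp (-2 * β * (m : ℝ)) := by
  refine ⟨1, one_pos, fun m hm => ?_⟩
  obtain ⟨k, rfl⟩ : ∃ k, m = k + 1 := ⟨m - 1, by omega⟩
  have hbox : k + 1 ≤ (2 * (4 * k) + 1) ^ 4 * 16 := by
    nlinarith [Nat.le_self_pow (n := 4) (by norm_num) (8 * k + 1)]
  refine ⟨((2 * (4 * k) + 1) ^ 4 * 16).choose (k + 1), by exact_mod_cast Nat.choose_pos hbox,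
    fun β hβ μ hμ p _ => ?_⟩
  have := hμ.1
  set F := powersetCard (k + 1) (plaqBox p.1 (4 * k))
  have hcover : {x | ∃ S : Set Plaq, IsVortex x S ∧ p ∈ S ∧ ((k + 1 : ℕ) : ℕ∞) ≤ S.encard} ⊆
      ⋃ T ∈ F, {x | ↑T ⊆ negPlaqs x} := by
    rintro x ⟨S, hS, hpS, hcard⟩
    obtain ⟨T, hTS, hTbox, hTcard⟩ := hS.exists_subset_plaqBox hpS hcard
    exact Set.mem_biUnion (mem_powersetCard.2 ⟨hTbox, hTcard⟩) (hTS.trans hS.2.1)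
  calc μ.real _ ≤ μ.real (⋃ T ∈ F, {x | ↑T ⊆ negPlaqs x}) :=
        measureReal_mono hcover (measure_ne_top _ _)
    _ ≤ ∑ T ∈ F, μ.real {x | ↑T ⊆ negPlaqs x} := measureReal_biUnion_finset_le _ _
    _ ≤ ∑ T ∈ F, exp (-2 * β * ((k + 1 : ℕ) : ℝ)) := sum_le_sum fun T hT => by
        rw [← (mem_powersetCard.1 hT).2]
        exact hμ.measureReal_subset_negPlaqs_le (by linarith) T
    _ = _ := by rw [sum_const, nsmul_eq_mul, card_powersetCard, card_plaqBox]
end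

section
/- Every generalized loop γ in ℤ⁴ is the boundary of some finite surface P. Moreover, if γ is contained in a cube B (all its edges are in B), then P can be chosen so that all its plaquettes are in B. -/
open Finset

/-! Work with chains over `ZMod 2`. Fix a base point `a`; `stairPath a x` joins `a` to `x` along
the coordinate directions in increasing order, and `edgeCone a (x, i)` sweeps the edge `(x, i)` down
to the `i`-th leg of that staircase. These form a chain homotopy contracting `ℤ⁴`:
`∂ (edgeCone a (x, i)) = (x, i) + stairPath a x + stairPath a (x + eᵢ)`. Summed over a generalized
loop, each staircase occurs once per incident edge, hence an even number of times, so `γ` is the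
boundary of the mod-2 sum of the cones of its edges. With `a` the lower corner of a cube containing
`γ`, all these cones stay in the cube. -/

section IntervalSum

variable {M : Type*} [AddCommGroup M] [Module (ZMod 2) M]

lemma sum_Ico_min_max_add_one (f : ℤ → M) (l u : ℤ) :
    ∑ t ∈ Ico (min l (u + 1)) (max l (u + 1)), f t =
      ∑ t ∈ Ico (min l u) (max l u), f t + f u := by
  rcases le_or_gt l u with h | h
  · have hIco : Ico l (u + 1) = insert u (Ico l u) := by ext; simp; omega
    rw [min_eq_left h, max_eq_right h, min_eq_left (by omega), max_eq_right (by omega), hIco,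
      sum_insert (by simp), add_comm]
  · have hIco : Ico u l = insert u (Ico (u + 1) l) := by ext; simp; omega
    rw [min_eq_right h.le, max_eq_left h.le, min_eq_right (by omega), max_eq_left (by omega), hIco,
      sum_insert (by simp), add_comm (f u), add_assoc, ZModModule.add_self, add_zero]

lemma sum_Ico_min_max_add_add_one (g : ℤ → M) (l u : ℤ) :
    ∑ t ∈ Ico (min l u) (max l u), (g t + g (t + 1)) = g l + g u := by
  wlog h : l ≤ u generalizing l u
  · rw [min_comm, max_comm, this u l (by omega), add_comm]
  induction u, h using Int.leInduction with
  | base => simp [ZModModule.add_self]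
  | succ u hlu ih =>
    rw [sum_Ico_min_max_add_one, ih, add_assoc, ← add_assoc (g u), ZModModule.add_self, zero_add]

lemma sum_Ioi_add_add_one {d : ℕ} (G : ℕ → M) (i : Fin d) :
    ∑ m ∈ Ioi i, (G m + G (m + 1)) = G (i + 1) + G d := by
  have hmap := sum_map (Ioi i) Fin.valEmbedding fun n => G n + G (n + 1)
  rw [Fin.map_valEmbedding_Ioi, ← Finset.Ico_add_one_left_eq_Ioo] at hmap
  calc ∑ m ∈ Ioi i, (G m + G (m + 1))
      = ∑ n ∈ Ico (i + 1 : ℕ) d, (G (n + 1) - G n) := by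
        rw [← Fin.valEmbedding_apply, ← hmap]
        exact sum_congr rfl fun n _ => by rw [ZModModule.sub_eq_add, add_comm]
    _ = G (i + 1) + G d := by
        rw [sum_Ico_sub _ i.isLt, ZModModule.sub_eq_add, add_comm]

end IntervalSum

noncomputable def chainOf {α : Type*} (s : Finset α) : α →₀ ZMod 2 :=
  ∑ x ∈ s, Finsupp.single x 1

section Chains

variable {α β : Type*}

lemma chainOf_apply [DecidableEq α] (s : Finset α) (x : α) :
    chainOf s x = if x ∈ s then 1 else 0 := by
  simp [chainOf, Finsupp.finsetSum_apply, Finsupp.single_apply]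

lemma support_chainOf (s : Finset α) : (chainOf s).support = s := by
  classical
  ext x
  by_cases hx : x ∈ s <;> simp [chainOf_apply, hx]

lemma chainOf_support (c : α →₀ ZMod 2) : chainOf c.support = c := by
  classical
  ext x
  by_cases hx : c x = 0
  · rw [chainOf_apply, if_neg (Finsupp.notMem_support_iff.mpr hx), hx]
  · rw [chainOf_apply, if_pos (Finsupp.mem_support_iff.mpr hx)]
    revert hx; generalize c x = z; revert z; decide

lemma chainOf_insert [DecidableEq α] {s : Finset α} {x : α} (hx : x ∉ s) :
    chainOf (insert x s) = Finsupp.single x 1 + chainOf s :=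
  sum_insert hx

lemma linearCombination_chainOf_apply [DecidableEq β] (f : α → Finset β) (s : Finset α)
    (b : β) :
    Finsupp.linearCombination (ZMod 2) (fun a => chainOf (f a)) (chainOf s) b =
      #{a ∈ s | b ∈ f a} := by
  simp only [chainOf, map_sum, Finsupp.linearCombination_single, one_smul,
    Finsupp.finsetSum_apply, Finsupp.single_apply, sum_ite_eq', sum_boole]

end Chains

lemma unitVec_ne_zero (i : Fin 4) : unitVec i ≠ 0 := fun h => by
  simpa [unitVec] using congrFun h i

lemma unitVec_apply_nonneg (i k : Fin 4) : 0 ≤ unitVec i k := by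
  by_cases hk : k = i <;> simp [unitVec, hk]

lemma add_apply_unitVec_self (x : V4) (i : Fin 4) : (x + unitVec i) i = x i + 1 := by
  simp [unitVec]

lemma add_apply_unitVec_of_ne (x : V4) {i m : Fin 4} (h : m ≠ i) : (x + unitVec i) m = x m := by
  simp [unitVec, h]

lemma update_add_unitVec_self (y : V4) (m : Fin 4) (t : ℤ) :
    Function.update y m t + unitVec m = Function.update y m (t + 1) := by
  ext k; by_cases hk : k = m <;> simp [unitVec, hk]

lemma update_add_unitVec_of_ne (y : V4) {i m : Fin 4} (h : i ≠ m) (t : ℤ) :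
    Function.update y m t + unitVec i = Function.update (y + unitVec i) m t := by
  ext k; by_cases hk : k = m <;> simp [unitVec, hk, h.symm]

noncomputable def plaqBoundary : (Plaq →₀ ZMod 2) →ₗ[ZMod 2] Edge →₀ ZMod 2 :=
  Finsupp.linearCombination (ZMod 2) fun p => chainOf (plaqEdges p)

noncomputable def edgeBoundary : (Edge →₀ ZMod 2) →ₗ[ZMod 2] V4 →₀ ZMod 2 :=
  Finsupp.linearCombination (ZMod 2) fun e => chainOf (edgeVerts e)

lemma edgeBoundary_single (x : V4) (i : Fin 4) :
    edgeBoundary (Finsupp.single (x, i) 1) =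
      Finsupp.single x 1 + Finsupp.single (x + unitVec i) 1 := by
  rw [edgeBoundary, Finsupp.linearCombination_single, one_smul, edgeVerts,
    chainOf_insert (by simpa using unitVec_ne_zero i), chainOf, sum_singleton]

lemma plaqBoundary_single (z : V4) {i m : Fin 4} (h : i ≠ m) :
    plaqBoundary (Finsupp.single (z, i, m) 1) =
      Finsupp.single (z, i) 1 + Finsupp.single (z + unitVec m, i) 1 +
        Finsupp.single (z, m) 1 + Finsupp.single (z + unitVec i, m) 1 := by
  have hi := unitVec_ne_zero i
  have hm := unitVec_ne_zero m
  rw [plaqBoundary, Finsupp.linearCombination_single, one_smul, plaqEdges,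
    chainOf_insert (by simp [h, hm]), chainOf_insert (by simp [h.symm, hi]),
    chainOf_insert (by simp [h.symm]), chainOf, sum_singleton]
  abel

/- Summing over `Ico (min l u) (max l u)` makes segments and ladders symmetric in `l, u`, so the
cone identities below hold for every edge, not only for edges lying above the base point. -/
noncomputable def segmentChain (y : V4) (m : Fin 4) (l u : ℤ) : Edge →₀ ZMod 2 :=
  ∑ t ∈ Ico (min l u) (max l u), Finsupp.single (Function.update y m t, m) 1

noncomputable def ladderChain (y : V4) (i m : Fin 4) (l u : ℤ) : Plaq →₀ ZMod 2 :=
  ∑ t ∈ Ico (min l u) (max l u), Finsupp.single (Function.update y m t, i, m) 1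

lemma segmentChain_add_one (y : V4) (m : Fin 4) (l u : ℤ) :
    segmentChain y m l (u + 1) =
      segmentChain y m l u + Finsupp.single (Function.update y m u, m) 1 :=
  sum_Ico_min_max_add_one _ l u

lemma plaqBoundary_ladderChain (y : V4) {i m : Fin 4} (h : i ≠ m) (l u : ℤ) :
    plaqBoundary (ladderChain y i m l u) =
      Finsupp.single (Function.update y m l, i) 1 + Finsupp.single (Function.update y m u, i) 1 +
        (segmentChain y m l u + segmentChain (y + unitVec i) m l u) := by
  simp only [ladderChain, segmentChain, map_sum, plaqBoundary_single _ h,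
    update_add_unitVec_self, update_add_unitVec_of_ne y h, sum_add_distrib]
  rw [← sum_Ico_min_max_add_add_one (fun t => Finsupp.single (Function.update y m t, i) 1) l u,
    sum_add_distrib]
  abel

def stairCorner (a x : V4) (n : ℕ) : V4 := fun k => if (k : ℕ) < n then x k else a k

section StairCorner

variable (a x : V4)

lemma update_stairCorner_self (m : Fin 4) :
    Function.update (stairCorner a x m) m (a m) = stairCorner a x m := by
  simp [stairCorner]

lemma update_stairCorner_eq_stairCorner_succ (m : Fin 4) :
    Function.update (stairCorner a x m) m (x m) = stairCorner a x (m + 1) := by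
  ext k
  rcases lt_trichotomy k m with h | rfl | h
  · simp [stairCorner, h.ne, Fin.lt_def.mp h, Nat.lt_succ_of_lt (Fin.lt_def.mp h)]
  · simp [stairCorner]
  · have h' : ¬ (k : ℕ) < m + 1 := by have := Fin.lt_def.mp h; omega
    simp [stairCorner, h.ne', h', (Fin.lt_def.mp h).not_gt]

lemma stairCorner_four : stairCorner a x 4 = x := by
  ext k; simp [stairCorner, k.isLt]

lemma stairCorner_add_unitVec_of_lt {i : Fin 4} {n : ℕ} (h : (i : ℕ) < n) :
    stairCorner a (x + unitVec i) n = stairCorner a x n + unitVec i := by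
  ext k
  by_cases hk : (k : ℕ) < n
  · simp [stairCorner, hk]
  · have : k ≠ i := by rintro rfl; exact hk h
    simp [stairCorner, hk, unitVec, this]

lemma stairCorner_add_unitVec_of_le {i : Fin 4} {n : ℕ} (h : n ≤ i) :
    stairCorner a (x + unitVec i) n = stairCorner a x n := by
  ext k
  by_cases hk : (k : ℕ) < n
  · have : k ≠ i := by rintro rfl; omega
    simp [stairCorner, hk, unitVec, this]
  · simp [stairCorner, hk]

variable {a x} in
lemma stairCorner_mem_Icc (hax : a ≤ x) (n : ℕ) :
    a ≤ stairCorner a x n ∧ stairCorner a x n ≤ x := by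
  constructor <;> intro k <;> by_cases hk : (k : ℕ) < n <;> simp [stairCorner, hk, hax k]

end StairCorner

noncomputable def stairPath (a x : V4) : Edge →₀ ZMod 2 :=
  ∑ m : Fin 4, segmentChain (stairCorner a x m) m (a m) (x m)

noncomputable def edgeCone (a : V4) (e : Edge) : Plaq →₀ ZMod 2 :=
  ∑ m ∈ Ioi e.2, ladderChain (stairCorner a e.1 m) e.2 m (a m) (e.1 m)

lemma stairPath_add_stairPath_add_unitVec (a x : V4) (i : Fin 4) :
    stairPath a x + stairPath a (x + unitVec i) =
      Finsupp.single (stairCorner a x (i + 1), i) 1 +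
        ∑ m ∈ Ioi i, (segmentChain (stairCorner a x m) m (a m) (x m) +
          segmentChain (stairCorner a x m + unitVec i) m (a m) (x m)) := by
  have hsplit : ∀ m : Fin 4,
      segmentChain (stairCorner a x m) m (a m) (x m) +
        segmentChain (stairCorner a (x + unitVec i) m) m (a m) ((x + unitVec i) m) =
      (if m = i then Finsupp.single (stairCorner a x (i + 1), i) 1 else 0) +
        (if i < m then segmentChain (stairCorner a x m) m (a m) (x m) +
          segmentChain (stairCorner a x m + unitVec i) m (a m) (x m) else 0) := by
    intro m
    rcases lt_trichotomy m i with h | rfl | h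
    · rw [stairCorner_add_unitVec_of_le a x (Fin.le_def.mp h.le), add_apply_unitVec_of_ne x h.ne,
        ZModModule.add_self, if_neg h.ne, if_neg h.not_gt, add_zero]
    · rw [stairCorner_add_unitVec_of_le a x le_rfl, add_apply_unitVec_self, segmentChain_add_one,
        update_stairCorner_eq_stairCorner_succ, ← add_assoc, ZModModule.add_self, if_pos rfl,
        if_neg (lt_irrefl m), zero_add, add_zero]
    · rw [stairCorner_add_unitVec_of_lt a x (Fin.lt_def.mp h), add_apply_unitVec_of_ne x h.ne',
        if_neg h.ne', if_pos h, zero_add]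
  rw [stairPath, stairPath, ← sum_add_distrib, sum_congr rfl fun m _ => hsplit m,
    sum_add_distrib, sum_ite_eq', if_pos (mem_univ i), ← sum_filter, filter_lt_eq_Ioi]

lemma plaqBoundary_edgeCone (a x : V4) (i : Fin 4) :
    plaqBoundary (edgeCone a (x, i)) =
      Finsupp.single (x, i) 1 + (stairPath a x + stairPath a (x + unitVec i)) := by
  rw [edgeCone, map_sum,
    sum_congr rfl fun m hm => plaqBoundary_ladderChain _ (mem_Ioi.mp hm).ne _ _]
  simp only [update_stairCorner_self, update_stairCorner_eq_stairCorner_succ]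
  rw [sum_add_distrib, sum_Ioi_add_add_one (fun n => Finsupp.single (stairCorner a x n, i) 1),
    stairCorner_four, stairPath_add_stairPath_add_unitVec]
  abel

noncomputable def pathHomotopy (a : V4) :
    (V4 →₀ ZMod 2) →ₗ[ZMod 2] Edge →₀ ZMod 2 :=
  Finsupp.linearCombination (ZMod 2) (stairPath a)

noncomputable def surfaceHomotopy (a : V4) :
    (Edge →₀ ZMod 2) →ₗ[ZMod 2] Plaq →₀ ZMod 2 :=
  Finsupp.linearCombination (ZMod 2) (edgeCone a)

theorem plaqBoundary_surfaceHomotopy (a : V4) (c : Edge →₀ ZMod 2) :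
    plaqBoundary (surfaceHomotopy a c) = c + pathHomotopy a (edgeBoundary c) := by
  induction c using Finsupp.induction_linear with
  | zero => simp
  | add c c' hc hc' => simp only [map_add, hc, hc']; abel
  | single e r =>
    obtain ⟨x, i⟩ := e
    rw [← Finsupp.smul_single_one]
    simp only [map_smul, surfaceHomotopy, pathHomotopy, Finsupp.linearCombination_single,
      one_smul, plaqBoundary_edgeCone, edgeBoundary_single, map_add, smul_add]

lemma mem_support_edgeCone {a : V4} {e : Edge} {p : Plaq} (hp : p ∈ (edgeCone a e).support) :
    ∃ m, e.2 < m ∧ ∃ t ∈ Ico (min (a m) (e.1 m)) (max (a m) (e.1 m)),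
      p = (Function.update (stairCorner a e.1 m) m t, e.2, m) := by
  classical
  obtain ⟨m, hm, hp⟩ := mem_biUnion.mp (Finsupp.support_finsetSum hp)
  obtain ⟨t, ht, hp⟩ := mem_biUnion.mp (Finsupp.support_finsetSum hp)
  exact ⟨m, mem_Ioi.mp hm, t, ht, mem_singleton.mp (Finsupp.support_single_subset hp)⟩

lemma mem_support_surfaceHomotopy {a : V4} {c : Edge →₀ ZMod 2} {p : Plaq}
    (hp : p ∈ (surfaceHomotopy a c).support) :
    ∃ e ∈ c.support, p ∈ (edgeCone a e).support := by
  classical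
  rw [surfaceHomotopy, Finsupp.linearCombination_apply] at hp
  obtain ⟨e, he, hp⟩ := mem_biUnion.mp (Finsupp.support_sum hp)
  exact ⟨e, he, Finsupp.support_smul hp⟩

lemma lt_of_mem_support_surfaceHomotopy {a : V4} {c : Edge →₀ ZMod 2} {p : Plaq}
    (hp : p ∈ (surfaceHomotopy a c).support) : p.2.1 < p.2.2 := by
  obtain ⟨e, -, hp⟩ := mem_support_surfaceHomotopy hp
  obtain ⟨m, hm, t, -, rfl⟩ := mem_support_edgeCone hp
  exact hm

lemma mem_cubeV_iff {a v : V4} {w : ℕ} :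
    v ∈ cubeV a w ↔ ∀ k, a k ≤ v k ∧ v k ≤ a k + w := by
  simp [cubeV, Fintype.mem_piFinset]

lemma mem_cubeV_of_le_of_le {a v y : V4} {w : ℕ} (hy : y ∈ cubeV a w) (hav : a ≤ v)
    (hvy : v ≤ y) : v ∈ cubeV a w :=
  mem_cubeV_iff.mpr fun k => ⟨hav k, (hvy k).trans (mem_cubeV_iff.mp hy k).2⟩

lemma plaqVerts_subset_Icc (p : Plaq) :
    ∀ v ∈ plaqVerts p, p.1 ≤ v ∧ v ≤ p.1 + unitVec p.2.1 + unitVec p.2.2 := by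
  intro v hv
  simp only [plaqVerts, mem_insert, mem_singleton] at hv
  rcases hv with rfl | rfl | rfl | rfl <;> refine ⟨fun k => ?_, fun k => ?_⟩ <;>
    simp only [Pi.add_apply] <;>
    linarith [unitVec_apply_nonneg p.2.1 k, unitVec_apply_nonneg p.2.2 k]

lemma support_edgeCone_subset_cubePlaqs {a : V4} {w : ℕ} {e : Edge} (he : e ∈ cubeEdges a w) :
    (edgeCone a e).support ⊆ cubePlaqs a w := by
  obtain ⟨x, i⟩ := e
  simp only [cubeEdges, mem_filter, mem_product] at he
  have hax : a ≤ x := fun k => (mem_cubeV_iff.mp he.1.1 k).1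
  intro p hp
  obtain ⟨m, him, t, ht, rfl⟩ := mem_support_edgeCone hp
  rw [min_eq_left (hax m), max_eq_right (hax m), mem_Ico] at ht
  have hcorner := stairCorner_mem_Icc hax m
  have hlow : a ≤ Function.update (stairCorner a x m) m t :=
    le_update_iff.mpr ⟨ht.1, fun k _ => hcorner.1 k⟩
  have hhigh :
      Function.update (stairCorner a x m) m t + unitVec i + unitVec m ≤ x + unitVec i := by
    rw [add_right_comm, update_add_unitVec_self]
    exact add_le_add_left (update_le_iff.mpr ⟨ht.2, fun k _ => hcorner.2 k⟩) _
  have hcube (v) (hv : v ∈ plaqVerts (Function.update (stairCorner a x m) m t, i, m)) :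
      v ∈ cubeV a w :=
    have hv := plaqVerts_subset_Icc _ v hv
    mem_cubeV_of_le_of_le he.2 (hlow.trans hv.1) (hv.2.trans hhigh)
  simp only [cubePlaqs, mem_filter, mem_product, mem_univ, and_true]
  exact ⟨hcube _ (by simp [plaqVerts]), him, hcube⟩

lemma support_surfaceHomotopy_subset_cubePlaqs {a : V4} {w : ℕ} {c : Edge →₀ ZMod 2}
    (hc : ∀ e ∈ c.support, e ∈ cubeEdges a w) :
    (surfaceHomotopy a c).support ⊆ cubePlaqs a w := by
  intro p hp
  obtain ⟨e, he, hp⟩ := mem_support_surfaceHomotopy hp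
  exact support_edgeCone_subset_cubePlaqs (hc e he) hp

lemma edgeBoundary_chainOf_eq_zero {γ : Finset Edge}
    (hγ : ∀ v : V4, Even #{e ∈ γ | v ∈ edgeVerts e}) : edgeBoundary (chainOf γ) = 0 := by
  ext v
  rw [edgeBoundary, linearCombination_chainOf_apply, ZMod.natCast_eq_zero_iff_even.mpr (hγ v),
    Finsupp.zero_apply]

lemma mem_iff_odd_of_plaqBoundary_eq {c : Plaq →₀ ZMod 2} {γ : Finset Edge}
    (h : plaqBoundary c = chainOf γ) (e : Edge) :
    e ∈ γ ↔ Odd #{p ∈ c.support | e ∈ plaqEdges p} := by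
  have he := congrArg (· e) h
  rw [← chainOf_support c, plaqBoundary, linearCombination_chainOf_apply, chainOf_apply] at he
  rw [← ZMod.natCast_eq_one_iff_odd, he]
  by_cases hγ : e ∈ γ <;> simp [hγ]

/-- **Lemma 2.2 (Generalized loops bound surfaces).**
Every generalized loop `γ` in `ℤ⁴` is the boundary of some finite surface `P` (i.e. `γ` is
exactly the set of edges contained in an odd number of plaquettes of `P`).  Moreover, if
`γ` is contained in a cube `B`, then `P` can be chosen with all its plaquettes in `B`. -/
theorem genloop_is_boundary_of_surface (γ : Finset Edge) (hγ : IsGenLoop γ) :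
    (∃ P : Finset Plaq, (∀ p ∈ P, p.2.1 < p.2.2) ∧
      ∀ e : Edge, e ∈ γ ↔ Odd ((P.filter fun p => e ∈ plaqEdges p).card)) ∧
    ∀ (a : V4) (w : ℕ), 0 < w → (∀ e ∈ γ, e ∈ cubeEdges a w) →
      ∃ P : Finset Plaq, P ⊆ cubePlaqs a w ∧
        ∀ e : Edge, e ∈ γ ↔ Odd ((P.filter fun p => e ∈ plaqEdges p).card) := by
  have hbd (a : V4) : plaqBoundary (surfaceHomotopy a (chainOf γ)) = chainOf γ := by
    rw [plaqBoundary_surfaceHomotopy, edgeBoundary_chainOf_eq_zero hγ.2, map_zero, add_zero]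
  refine ⟨⟨_, fun _ => lt_of_mem_support_surfaceHomotopy,
      mem_iff_odd_of_plaqBoundary_eq (hbd 0)⟩,
    fun a w _ hγB => ⟨_, ?_, mem_iff_odd_of_plaqBoundary_eq (hbd a)⟩⟩
  refine support_surfaceHomotopy_subset_cubePlaqs fun e he => hγB e ?_
  rwa [support_chainOf] at he
end
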